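/- Let 0 < γ < 1. Then the infinite series ∑_{k=0}^{∞} l_k^{2,γ} converges to 0. -/

import Mathlib

/-- Grünwald–Letnikov coefficient `g_k^α = (-1)^k * binom(α,k)`. -/
noncomputable def gl (a : ℝ) (k : ℕ) : ℝ :=
  (-1 : ℝ) ^ k * (∏ j ∈ Finset.range k, (a - j)) / (Nat.factorial k : ℝ)

/-- Shifted Grünwald weights. -/
noncomputable def glw (a : ℝ) : ℕ → ℝ
  | 0 => a / 2 * gl a 0
  | (k+1) => a / 2 * gl a (k+1) + (2 - a) / 2 * gl a k

/-- Second-order Lubich coefficients `l_m^{2,γ}`. -/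
noncomputable def lub2 (g : ℝ) (m : ℕ) : ℝ :=
  (3/2 : ℝ) ^ g * ∑ k ∈ Finset.range (m+1), (1/3 : ℝ) ^ k * gl g k * gl g (m - k)

/-- The Toeplitz matrix `B_α` of size `(M-1) × (M-1)`. -/
noncomputable def Bmat (a : ℝ) (M : ℕ) : Matrix (Fin (M-1)) (Fin (M-1)) ℝ :=
  fun i j => if (j : ℕ) ≤ (i : ℕ) + 1 then glw a ((i : ℕ) + 1 - (j : ℕ)) else 0

/-- The symmetric matrix `A_α = B_α + B_αᵀ`. -/
noncomputable def Amat (a : ℝ) (M : ℕ) : Matrix (Fin (M-1)) (Fin (M-1)) ℝ :=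
  Bmat a M + (Bmat a M).transpose

/-!
The coefficients `gl γ` are the Taylor coefficients of `(1 - ζ)^γ`, so `lub2 γ` is `(3/2)^γ` times
the Cauchy product of the coefficients of `(1 - ζ/3)^γ` and of `(1 - ζ)^γ`. For `0 < γ ≤ 1` every
coefficient of `(1 - ζ)^γ` after the first is nonpositive, and the partial sums are
`∏_{j<n} (1 - γ/(j+1)) ≤ exp (-γ H_n) → 0`. Hence `∑ gl γ k` converges absolutely to `0`, and
so does its Cauchy product with the absolutely convergent `∑ 3^{-k} gl γ k`.
-/

open Finset Filter Topology

section GrunwaldLetnikov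

variable (γ : ℝ)

lemma gl_zero : gl γ 0 = 1 := by simp [gl]

lemma gl_succ (k : ℕ) : gl γ (k + 1) = gl γ k * ((k - γ) / (k + 1)) := by
  have hk : (k : ℝ) + 1 ≠ 0 := by positivity
  simp only [gl, prod_range_succ, Nat.factorial_succ, Nat.cast_mul, pow_succ]
  push_cast
  field_simp
  ring

lemma gl_succ_eq_neg_mul_prod (n : ℕ) :
    gl γ (n + 1) = -(γ / (n + 1)) * ∏ j ∈ range n, (1 - γ / (j + 1)) := by
  induction n with
  | zero => simp [gl_succ, gl_zero]
  | succ n ih =>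
    rw [gl_succ, ih, prod_range_succ]
    have h1 : (n : ℝ) + 1 ≠ 0 := by positivity
    have h2 : (n : ℝ) + 1 + 1 ≠ 0 := by positivity
    push_cast
    field_simp

lemma sum_range_succ_gl (n : ℕ) :
    ∑ k ∈ range (n + 1), gl γ k = ∏ j ∈ range n, (1 - γ / (j + 1)) := by
  induction n with
  | zero => simp [gl_zero]
  | succ n ih =>
    rw [sum_range_succ, ih, gl_succ_eq_neg_mul_prod, prod_range_succ]
    ring

variable {γ}

lemma one_sub_div_succ_nonneg (hγ1 : γ ≤ 1) (j : ℕ) : 0 ≤ 1 - γ / (j + 1) := by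
  rw [sub_nonneg, div_le_one (by positivity)]
  linarith [j.cast_nonneg (α := ℝ)]

lemma prod_one_sub_div_succ_le_exp (hγ1 : γ ≤ 1) (n : ℕ) :
    ∏ j ∈ range n, (1 - γ / (j + 1)) ≤ Real.exp (-γ * ∑ j ∈ range n, (1 / ((j : ℝ) + 1))) := by
  calc ∏ j ∈ range n, (1 - γ / (j + 1))
      ≤ ∏ j ∈ range n, Real.exp (-(γ / (j + 1))) :=
        prod_le_prod (fun j _ ↦ one_sub_div_succ_nonneg hγ1 j)
          (fun j _ ↦ Real.one_sub_le_exp_neg _)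
    _ = Real.exp (-γ * ∑ j ∈ range n, (1 / ((j : ℝ) + 1))) := by
        rw [← Real.exp_sum, mul_sum]
        congr 1
        exact sum_congr rfl fun j _ ↦ by ring

lemma tendsto_prod_one_sub_div_succ (hγ0 : 0 < γ) (hγ1 : γ ≤ 1) :
    Tendsto (fun n ↦ ∏ j ∈ range n, (1 - γ / (j + 1))) atTop (𝓝 0) := by
  have hexp : Tendsto (fun n ↦ Real.exp (-γ * ∑ j ∈ range n, (1 / ((j : ℝ) + 1)))) atTop (𝓝 0) :=
    Real.tendsto_exp_atBot.comp
      (Real.tendsto_sum_range_one_div_nat_succ_atTop.const_mul_atTop_of_neg (by linarith))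
  exact tendsto_of_tendsto_of_tendsto_of_le_of_le tendsto_const_nhds hexp
    (fun n ↦ prod_nonneg fun j _ ↦ one_sub_div_succ_nonneg hγ1 j)
    (prod_one_sub_div_succ_le_exp hγ1)

lemma gl_succ_nonpos (hγ0 : 0 ≤ γ) (hγ1 : γ ≤ 1) (k : ℕ) : gl γ (k + 1) ≤ 0 := by
  rw [gl_succ_eq_neg_mul_prod, neg_mul, neg_nonpos]
  exact mul_nonneg (by positivity) (prod_nonneg fun j _ ↦ one_sub_div_succ_nonneg hγ1 j)

lemma hasSum_neg_gl_succ (hγ0 : 0 < γ) (hγ1 : γ ≤ 1) : HasSum (fun k ↦ -gl γ (k + 1)) 1 := by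
  rw [hasSum_iff_tendsto_nat_of_nonneg (fun k ↦ neg_nonneg.2 (gl_succ_nonpos hγ0.le hγ1 k))]
  have hpartial (n : ℕ) :
      ∑ k ∈ range n, -gl γ (k + 1) = 1 - ∏ j ∈ range n, (1 - γ / (j + 1)) := by
    rw [← sum_range_succ_gl, sum_range_succ', gl_zero, sum_neg_distrib]
    ring
  simp_rw [hpartial]
  simpa using (tendsto_prod_one_sub_div_succ hγ0 hγ1).const_sub 1

lemma hasSum_gl (hγ0 : 0 < γ) (hγ1 : γ ≤ 1) : HasSum (gl γ) 0 := by
  rw [← hasSum_nat_add_iff' 1]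
  simpa [gl_zero] using (hasSum_neg_gl_succ hγ0 hγ1).neg

lemma summable_norm_gl (hγ0 : 0 < γ) (hγ1 : γ ≤ 1) : Summable (fun k ↦ ‖gl γ k‖) := by
  rw [← summable_nat_add_iff 1]
  refine (hasSum_neg_gl_succ hγ0 hγ1).summable.congr fun k ↦ ?_
  rw [Real.norm_of_nonpos (gl_succ_nonpos hγ0.le hγ1 k)]

end GrunwaldLetnikov

theorem stmt10 (γ : ℝ) (hγ0 : 0 < γ) (hγ1 : γ < 1) :
    HasSum (lub2 γ) 0 := by
  have hnorm := summable_norm_gl hγ0 hγ1.le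
  have hnorm_scaled : Summable (fun k ↦ ‖(1 / 3 : ℝ) ^ k * gl γ k‖) :=
    hnorm.of_nonneg_of_le (fun _ ↦ norm_nonneg _) fun k ↦ by
      rw [norm_mul]
      exact mul_le_of_le_one_left (norm_nonneg _) (by simp [inv_le_one_of_one_le₀, one_le_pow₀])
  have hcauchy :=
    (hasSum_sum_range_mul_of_summable_norm hnorm_scaled hnorm).mul_left ((3 / 2 : ℝ) ^ γ)
  rw [(hasSum_gl hγ0 hγ1.le).tsum_eq, mul_zero, mul_zero] at hcauchy
  exact hcauchy
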